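/- arXiv:1307.5357 — 2 statements merged into one kernel-verified Lean document; each statement's English description precedes it below -/
import Mathlib

section
/- Let g = gl_n(ℂ) × gl_{n-1}(ℂ) with n ≥ 2, let h ⊂ g be the image of gl_{n-1}(ℂ) under the embedding x ↦ (diag(x,0), x) (where diag(x,0) places x in the upper-left (n-1)×(n-1) block), and let b = b_n × b_{n-1} where b_n ⊂ gl_n(ℂ) is the Borel subalgebra of upper triangular matrices conjugated by a fixed element making it transverse to h. Then for the specific theta-stable Borel subalgebras b_n, b_{n-1} constructed from the fundamental Cartan subalgebras t_n, t_{n-1}, one has g = h ⊕ b as vector spaces. -/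
/-!
Take `u_k = 1 + i J_k`, with `J_k` the antidiagonal permutation matrix, and `b_k = Ad(u_k) b⁺` for
the upper triangular `b⁺`. As `u_k` is symmetric and `u_k² = 2i J_k`, transposition maps `b_k` to
`Ad(u_k) (J_k (b⁺)ᵀ J_k) = b_k`, so `b_k` is `θ`-stable.

For `x ∈ b_k` we have `u_k x u_k = 2i J_k t` with `t ∈ b⁺`, so the entries of `u_k x u_k` strictly
above the antidiagonal vanish. If `(diag(y,0), y) ∈ b_n × b_{n-1}`, this yields two families of
linear relations among the entries of `y`, reflecting indices by `i ↦ n-1-i` and by `i ↦ n-2-i`.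
They kill the border of `y` one layer at a time: the first family kills row and column `t`, then
the second kills row and column `n-2-t`. Hence `h ∩ b = 0`, and
`dim h + dim b = (n-1)² + n² = dim g`.
-/

open Matrix

/-- Upper triangular `k × k` complex matrices, as a subspace of `gl_k(ℂ)`. -/
noncomputable def upperTriangularSubmodule (k : ℕ) : Submodule ℂ (Matrix (Fin k) (Fin k) ℂ) where
  carrier := {x | ∀ i j : Fin k, j < i → x i j = 0}
  zero_mem' := by intro i j _; rfl
  add_mem' := by
    intro a b ha hb i j hij
    simp [Matrix.add_apply, ha i j hij, hb i j hij]
  smul_mem' := by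
    intro c a ha i j hij
    simp [Matrix.smul_apply, ha i j hij]

/-- Conjugation `x ↦ u x u⁻¹` by an invertible matrix, as a linear map. -/
noncomputable def conjL {k : ℕ} (u : GL (Fin k) ℂ) :
    Matrix (Fin k) (Fin k) ℂ →ₗ[ℂ] Matrix (Fin k) (Fin k) ℂ :=
  (LinearMap.mulLeft ℂ (u : Matrix (Fin k) (Fin k) ℂ)).comp
    (LinearMap.mulRight ℂ ((u⁻¹ : GL (Fin k) ℂ) : Matrix (Fin k) (Fin k) ℂ))

/-- The Lie algebra embedding `gl_{n-1}(ℂ) → gl_n(ℂ) × gl_{n-1}(ℂ)`,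
`x ↦ (diag(x,0), x)`, where `diag(x,0)` puts `x` in the upper-left
`(n-1)×(n-1)` block. -/
noncomputable def embL (n : ℕ) : Matrix (Fin (n - 1)) (Fin (n - 1)) ℂ →ₗ[ℂ]
    Matrix (Fin n) (Fin n) ℂ × Matrix (Fin (n - 1)) (Fin (n - 1)) ℂ where
  toFun x :=
    (Matrix.of fun i j : Fin n =>
      if hi : (i : ℕ) < n - 1 then
        if hj : (j : ℕ) < n - 1 then x ⟨i, hi⟩ ⟨j, hj⟩ else 0
      else 0, x)
  map_add' a b := by
    refine Prod.ext ?_ rfl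
    ext i j
    by_cases hi : (i : ℕ) < n - 1 <;> by_cases hj : (j : ℕ) < n - 1 <;>
      simp [hi, hj, Matrix.add_apply]
  map_smul' c a := by
    refine Prod.ext ?_ rfl
    ext i j
    by_cases hi : (i : ℕ) < n - 1 <;> by_cases hj : (j : ℕ) < n - 1 <;>
      simp [hi, hj, Matrix.smul_apply]

open Complex

lemma conjL_apply {k : ℕ} (u : GL (Fin k) ℂ) (t : Matrix (Fin k) (Fin k) ℂ) :
    conjL u t = u * t * (u⁻¹ : GL (Fin k) ℂ) :=
  (Matrix.mul_assoc (u : Matrix (Fin k) (Fin k) ℂ) t _).symm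

lemma mem_map_conjL_iff {k : ℕ} (u : GL (Fin k) ℂ) (x : Matrix (Fin k) (Fin k) ℂ) :
    x ∈ (upperTriangularSubmodule k).map (conjL u) ↔
      ((u⁻¹ : GL (Fin k) ℂ) : Matrix (Fin k) (Fin k) ℂ) * x * u ∈ upperTriangularSubmodule k := by
  constructor
  · rintro ⟨t, ht, rfl⟩
    simpa [conjL_apply, Matrix.mul_assoc] using ht
  · intro hx
    refine ⟨_, hx, ?_⟩
    simp [conjL_apply, ← Matrix.mul_assoc]

lemma conjL_injective {k : ℕ} (u : GL (Fin k) ℂ) : Function.Injective (conjL u) := by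
  intro a b h
  simpa [conjL_apply, Matrix.mul_assoc] using
    congrArg (fun x => ((u⁻¹ : GL (Fin k) ℂ) : Matrix (Fin k) (Fin k) ℂ) * x * u) h

section Reversal

variable (k : ℕ)

abbrev revMatrix : Matrix (Fin k) (Fin k) ℂ :=
  (Fin.revPerm : Equiv.Perm (Fin k)).permMatrix ℂ

variable {k}

lemma revMatrix_mul (x : Matrix (Fin k) (Fin k) ℂ) : revMatrix k * x = x.submatrix Fin.rev id :=
  PEquiv.toMatrix_toPEquiv_mul _ x

lemma mul_revMatrix (x : Matrix (Fin k) (Fin k) ℂ) : x * revMatrix k = x.submatrix id Fin.rev :=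
  PEquiv.mul_toMatrix_toPEquiv x _

lemma revMatrix_mul_self : revMatrix k * revMatrix k = 1 := by
  ext i j
  simp [revMatrix_mul, Matrix.one_apply]

lemma transpose_revMatrix : (revMatrix k)ᵀ = revMatrix k := by
  rw [transpose_permMatrix]
  rfl

lemma revMatrix_mul_transpose_mul_revMatrix_mem {t : Matrix (Fin k) (Fin k) ℂ}
    (ht : t ∈ upperTriangularSubmodule k) :
    revMatrix k * tᵀ * revMatrix k ∈ upperTriangularSubmodule k := by
  intro i j hij
  simpa [revMatrix_mul, mul_revMatrix] using ht j.rev i.rev (Fin.rev_lt_rev.mpr hij)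

end Reversal

theorem map_conjL_transpose_stable {k : ℕ} (u : GL (Fin k) ℂ) {c : ℂ} (hc : c ≠ 0)
    (hsymm : (u : Matrix (Fin k) (Fin k) ℂ)ᵀ = u)
    (hsq : (u : Matrix (Fin k) (Fin k) ℂ) * u = c • revMatrix k) :
    ∀ x ∈ (upperTriangularSubmodule k).map (conjL u),
      -xᵀ ∈ (upperTriangularSubmodule k).map (conjL u) := by
  intro x hx
  rw [mem_map_conjL_iff] at hx ⊢
  have hinv_sq : (↑(u⁻¹ * u⁻¹) : Matrix (Fin k) (Fin k) ℂ) = c⁻¹ • revMatrix k := by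
    rw [← _root_.mul_inv_rev]
    refine Units.inv_eq_of_mul_eq_one_right ?_
    rw [Units.val_mul, hsq, Matrix.smul_mul, Matrix.mul_smul, smul_smul, mul_inv_cancel₀ hc,
      one_smul, revMatrix_mul_self]
  set U : Matrix (Fin k) (Fin k) ℂ := ↑u
  set V : Matrix (Fin k) (Fin k) ℂ := ↑(u⁻¹ : GL (Fin k) ℂ)
  have hVU (y : Matrix (Fin k) (Fin k) ℂ) : V * (U * y) = y := by
    rw [← Matrix.mul_assoc, u.inv_mul, Matrix.one_mul]
  have hVsymm : Vᵀ = V := by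
    have h : Vᵀ * U = 1 := by
      rw [← hsymm, ← Matrix.transpose_mul, u.mul_inv, Matrix.transpose_one]
    calc Vᵀ = Vᵀ * (U * V) := by rw [u.mul_inv, Matrix.mul_one]
      _ = V := by rw [← Matrix.mul_assoc, h, Matrix.one_mul]
  have key : V * xᵀ * U = revMatrix k * (V * x * U)ᵀ * revMatrix k :=
    calc V * xᵀ * U = V * V * (V * x * U)ᵀ * (U * U) := by
          simp only [Matrix.transpose_mul, hsymm, hVsymm, Matrix.mul_assoc, hVU]
      _ = revMatrix k * (V * x * U)ᵀ * revMatrix k := by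
          rw [← Units.val_mul, hinv_sq, hsq, Matrix.smul_mul, Matrix.mul_smul, Matrix.smul_mul,
            smul_smul, mul_inv_cancel₀ hc, one_smul]
  rw [Matrix.mul_neg, Matrix.neg_mul, key]
  exact neg_mem (revMatrix_mul_transpose_mul_revMatrix_mem hx)

lemma mul_mul_apply_eq_zero_of_mem_map_conjL {k : ℕ} (u : GL (Fin k) ℂ) {c : ℂ}
    (hsq : (u : Matrix (Fin k) (Fin k) ℂ) * u = c • revMatrix k)
    {x : Matrix (Fin k) (Fin k) ℂ} (hx : x ∈ (upperTriangularSubmodule k).map (conjL u))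
    {i j : Fin k} (hij : j < i.rev) : ((u : Matrix (Fin k) (Fin k) ℂ) * x * u) i j = 0 := by
  have h : (u : Matrix (Fin k) (Fin k) ℂ) * x * u
      = c • (revMatrix k * (((u⁻¹ : GL (Fin k) ℂ) : Matrix (Fin k) (Fin k) ℂ) * x * u)) := by
    rw [← Matrix.smul_mul, ← hsq]
    simp only [Matrix.mul_assoc, Units.mul_inv_cancel_left]
  rw [mem_map_conjL_iff] at hx
  rw [h, Matrix.smul_apply, revMatrix_mul, Matrix.submatrix_apply, id, hx _ _ hij, smul_zero]

section Cayley

variable (k : ℕ)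

lemma one_add_smul_revMatrix_mul (a b : ℂ) :
    (1 + a • revMatrix k) * (1 + b • revMatrix k) = (1 + a * b) • 1 + (a + b) • revMatrix k := by
  simp only [add_mul, mul_add, Matrix.one_mul, Matrix.mul_one, Matrix.smul_mul, Matrix.mul_smul,
    smul_smul, revMatrix_mul_self, add_smul, one_smul, mul_comm b a]
  abel

/-- `Ad (cayley k)` maps the diagonal Cartan subalgebra onto the paper's `γ_k(ℂ^k)` up to a
reordering of coordinates: `cayley k` pairs coordinate `j` with `k-1-j`, while `γ_k` pairs
consecutive coordinates. -/
noncomputable def cayley : GL (Fin k) ℂ where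
  val := 1 + I • revMatrix k
  inv := (2 : ℂ)⁻¹ • (1 + (-I) • revMatrix k)
  val_inv := by
    rw [Matrix.mul_smul, one_add_smul_revMatrix_mul]
    norm_num [smul_smul]
  inv_val := by
    rw [Matrix.smul_mul, one_add_smul_revMatrix_mul]
    norm_num [smul_smul]

lemma transpose_cayley : (cayley k : Matrix (Fin k) (Fin k) ℂ)ᵀ = cayley k := by
  show (1 + I • revMatrix k)ᵀ = 1 + I • revMatrix k
  rw [Matrix.transpose_add, Matrix.transpose_smul, Matrix.transpose_one, transpose_revMatrix]

lemma cayley_mul_self :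
    (cayley k : Matrix (Fin k) (Fin k) ℂ) * cayley k = (2 * I) • revMatrix k := by
  simp [cayley, one_add_smul_revMatrix_mul, two_mul]

variable {k}

lemma cayley_mul_mul_cayley_apply (x : Matrix (Fin k) (Fin k) ℂ) (i j : Fin k) :
    ((cayley k : Matrix (Fin k) (Fin k) ℂ) * x * cayley k) i j
      = x i j + I * x i.rev j + I * x i j.rev - x i.rev j.rev := by
  simp only [cayley, add_mul, mul_add, Matrix.one_mul, Matrix.mul_one, Matrix.smul_mul,
    Matrix.mul_smul, revMatrix_mul, mul_revMatrix, Matrix.add_apply, Matrix.smul_apply,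
    Matrix.submatrix_apply, smul_eq_mul, smul_smul, id]
  linear_combination x i.rev j.rev * I_sq

end Cayley

lemma map_conjL_cayley_transpose_stable (k : ℕ) :
    ∀ x ∈ (upperTriangularSubmodule k).map (conjL (cayley k)),
      -xᵀ ∈ (upperTriangularSubmodule k).map (conjL (cayley k)) :=
  map_conjL_transpose_stable (cayley k) (by simp) (transpose_cayley k) (cayley_mul_self k)

lemma eq_zero_of_eq_mul_of_eq_mul {p q c : ℂ} (hc : c * c = -1) (hp : p = c * q)
    (hq : q = c * p) : p = 0 := by
  linear_combination (hp + c * hq + p * hc) / 2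

/-- The vanishing of the entries of `cayley k * x * cayley k` strictly above the antidiagonal,
for `x` given by its entries `Y` on `ℕ × ℕ`, so that the relations for the sizes `m + 1` and `m`
can be imposed on the same `Y`. -/
def CayleyRelations (k : ℕ) (Y : ℕ → ℕ → ℂ) : Prop :=
  ∀ i j, i + j + 2 ≤ k →
    Y i j + I * Y (k - 1 - i) j + I * Y i (k - 1 - j) - Y (k - 1 - i) (k - 1 - j) = 0

def VanishesOutsideSquare (m t : ℕ) (Y : ℕ → ℕ → ℂ) : Prop :=
  ∀ a b, a < t ∨ m ≤ a + t ∨ b < t ∨ m ≤ b + t → Y a b = 0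

section Peeling

variable {k m t : ℕ} {Y : ℕ → ℕ → ℂ}

lemma CayleyRelations.swap (h : CayleyRelations k Y) : CayleyRelations k (Function.swap Y) :=
  fun i j hij => by
    simp only [Function.swap]
    linear_combination h j i (by omega)

lemma VanishesOutsideSquare.swap (h : VanishesOutsideSquare m t Y) :
    VanishesOutsideSquare m t (Function.swap Y) :=
  fun a b hab => h b a (by omega)

lemma VanishesOutsideSquare.row_eq_zero (hY : VanishesOutsideSquare m t Y)
    (hA : CayleyRelations (m + 1) Y) (ht : 2 * t + 1 ≤ m) (b : ℕ) : Y t b = 0 := by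
  have key : ∀ j, t ≤ j → j + t + 1 ≤ m → Y t j = -I * Y t (m - j) := by
    intro j hj hjm
    have h := hA t j (by omega)
    rw [Nat.add_sub_cancel, hY (m - t) j (by omega), hY (m - t) (m - j) (by omega)] at h
    linear_combination h
  rcases (show b < t ∨ m ≤ b + t ∨ b = t ∨ (t < b ∧ b + t < m) by omega)
    with hb | hb | rfl | ⟨hb₁, hb₂⟩
  · exact hY t b (by omega)
  · exact hY t b (by omega)
  · rw [key b le_rfl (by omega), hY b (m - b) (by omega), mul_zero]
  · refine eq_zero_of_eq_mul_of_eq_mul (by simp) (key b hb₁.le (by omega)) ?_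
    simpa [Nat.sub_sub_self (by omega : b ≤ m)] using key (m - b) (by omega) (by omega)

lemma VanishesOutsideSquare.row_rev_eq_zero (hY : VanishesOutsideSquare m t Y)
    (hB : CayleyRelations m Y) (hrow : ∀ b, Y t b = 0) (hcol : ∀ a, Y a t = 0) (b : ℕ) :
    Y (m - 1 - t) b = 0 := by
  have key : ∀ j, j + t + 2 ≤ m → Y (m - 1 - t) (m - 1 - j) = I * Y (m - 1 - t) j := by
    intro j hj
    have h := hB t j (by omega)
    rw [hrow, hrow] at h
    linear_combination -h
  rcases (show b < t ∨ m ≤ b + t ∨ b = t ∨ (b = m - 1 - t ∧ t + t + 2 ≤ m) ∨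
      (t < b ∧ b + t + 2 ≤ m) by omega) with hb | hb | rfl | ⟨rfl, hm⟩ | ⟨hb₁, hb₂⟩
  · exact hY _ b (by omega)
  · exact hY _ b (by omega)
  · exact hcol _
  · rw [key t hm, hcol, mul_zero]
  · refine eq_zero_of_eq_mul_of_eq_mul I_mul_I ?_ (key b (by omega))
    simpa [Nat.sub_sub_self (by omega : b ≤ m - 1)] using key (m - 1 - b) (by omega)

lemma VanishesOutsideSquare.succ (hY : VanishesOutsideSquare m t Y)
    (hA : CayleyRelations (m + 1) Y) (hB : CayleyRelations m Y) :
    VanishesOutsideSquare m (t + 1) Y := by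
  by_cases ht : 2 * t + 1 ≤ m
  · have hrow := hY.row_eq_zero hA ht
    have hcol := hY.swap.row_eq_zero hA.swap ht
    have hrow' := hY.row_rev_eq_zero hB hrow hcol
    have hcol' := hY.swap.row_rev_eq_zero hB.swap hcol hrow
    intro a b hab
    rcases (show (a < t ∨ m ≤ a + t ∨ b < t ∨ m ≤ b + t) ∨ a = t ∨ b = t ∨ a = m - 1 - t ∨
        b = m - 1 - t by omega) with h | rfl | rfl | rfl | rfl
    · exact hY a b h
    · exact hrow b
    · exact hcol a
    · exact hrow' b
    · exact hcol' a
  · exact fun a b _ => hY a b (by omega)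

theorem eq_zero_of_cayleyRelations (hY : VanishesOutsideSquare m 0 Y)
    (hA : CayleyRelations (m + 1) Y) (hB : CayleyRelations m Y) (a b : ℕ) : Y a b = 0 := by
  have h : ∀ t, VanishesOutsideSquare m t Y := by
    intro t
    induction t with
    | zero => exact hY
    | succ t ih => exact ih.succ hA hB
  exact h m a b (by omega)

end Peeling

lemma cayleyRelations_of_mem {k : ℕ} {x : Matrix (Fin k) (Fin k) ℂ} {Y : ℕ → ℕ → ℂ}
    (hx : x ∈ (upperTriangularSubmodule k).map (conjL (cayley k)))
    (hxY : ∀ i j : Fin k, x i j = Y i j) : CayleyRelations k Y := by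
  intro i j hij
  have h := mul_mul_apply_eq_zero_of_mem_map_conjL (cayley k) (cayley_mul_self k) hx
    (i := ⟨i, by omega⟩) (j := ⟨j, by omega⟩) (by simp only [Fin.lt_def, Fin.val_rev]; omega)
  rw [cayley_mul_mul_cayley_apply] at h
  simpa only [hxY, Fin.val_rev, show k - (i + 1) = k - 1 - i by omega,
    show k - (j + 1) = k - 1 - j by omega] using h

def extendByZero {m : ℕ} (y : Matrix (Fin m) (Fin m) ℂ) (a b : ℕ) : ℂ :=
  if ha : a < m then if hb : b < m then y ⟨a, ha⟩ ⟨b, hb⟩ else 0 else 0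

section ExtendByZero

variable {m : ℕ} (y : Matrix (Fin m) (Fin m) ℂ)

lemma extendByZero_val (i j : Fin m) : extendByZero y i j = y i j := by
  simp [extendByZero]

lemma vanishesOutsideSquare_extendByZero : VanishesOutsideSquare m 0 (extendByZero y) := by
  intro a b hab
  unfold extendByZero
  split_ifs
  · omega
  · rfl
  · rfl

lemma embL_fst_apply (i j : Fin (m + 1)) : (embL (m + 1) y).1 i j = extendByZero y i j := by
  simp only [embL, extendByZero, LinearMap.coe_mk, AddHom.coe_mk, Matrix.of_apply,
    Nat.add_sub_cancel]

end ExtendByZero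

theorem disjoint_range_embL_prod (m : ℕ) :
    Disjoint (LinearMap.range (embL (m + 1)))
      (((upperTriangularSubmodule (m + 1)).map (conjL (cayley (m + 1)))).prod
        ((upperTriangularSubmodule m).map (conjL (cayley m)))) := by
  rw [Submodule.disjoint_def]
  rintro _ ⟨y, rfl⟩ ⟨h₁, h₂⟩
  have hY := eq_zero_of_cayleyRelations (vanishesOutsideSquare_extendByZero y)
    (cayleyRelations_of_mem h₁ (embL_fst_apply y))
    (cayleyRelations_of_mem h₂ fun i j => (extendByZero_val y i j).symm)
  have hy : y = 0 := by
    ext i j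
    simpa [extendByZero_val] using hY i j
  rw [hy, map_zero]

noncomputable def upperTriangularEquiv (k : ℕ) :
    upperTriangularSubmodule k ≃ₗ[ℂ] ({p : Fin k × Fin k // p.1 ≤ p.2} → ℂ) where
  toFun x p := (x : Matrix (Fin k) (Fin k) ℂ) p.1.1 p.1.2
  map_add' _ _ := rfl
  map_smul' _ _ := rfl
  invFun f := ⟨Matrix.of fun i j => if h : i ≤ j then f ⟨(i, j), h⟩ else 0,
    fun i j hij => dif_neg (not_le.mpr hij)⟩
  left_inv x := by
    ext i j
    by_cases h : i ≤ j
    · simp [h]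
    · simp [h, x.2 i j (not_le.mp h)]
  right_inv f := by
    ext p
    simp [p.2]

lemma finrank_upperTriangularSubmodule (k : ℕ) :
    Module.finrank ℂ (upperTriangularSubmodule k) = (k + 1).choose 2 := by
  rw [(upperTriangularEquiv k).finrank_eq, Module.finrank_pi, ← Fintype.card_congr Sym2.sortEquiv,
    Sym2.card, Fintype.card_fin]

lemma finrank_map_conjL {k : ℕ} (u : GL (Fin k) ℂ) :
    Module.finrank ℂ ((upperTriangularSubmodule k).map (conjL u)) = (k + 1).choose 2 := by
  rw [← finrank_upperTriangularSubmodule k,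
    ((upperTriangularSubmodule k).equivMapOfInjective _ (conjL_injective u)).finrank_eq]

lemma Submodule.finrank_prod_eq {K V W : Type*} [DivisionRing K] [AddCommGroup V] [Module K V]
    [AddCommGroup W] [Module K W] (p : Submodule K V) (q : Submodule K W)
    [FiniteDimensional K p] [FiniteDimensional K q] :
    Module.finrank K (p.prod q) = Module.finrank K p + Module.finrank K q := by
  rw [← Submodule.range_subtype p, ← Submodule.range_subtype q, ← LinearMap.range_prodMap,
    LinearMap.finrank_range_of_inj, Module.finrank_prod, Submodule.range_subtype,
    Submodule.range_subtype]
  exact Prod.map_injective.mpr ⟨p.subtype_injective, q.subtype_injective⟩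

lemma finrank_range_embL (n : ℕ) :
    Module.finrank ℂ (LinearMap.range (embL n)) = (n - 1) * (n - 1) := by
  rw [LinearMap.finrank_range_of_inj fun a b h => congrArg Prod.snd h, Module.finrank_matrix]
  simp

lemma Nat.choose_succ_two_add_choose_two (n : ℕ) : (n + 1).choose 2 + n.choose 2 = n * n := by
  have h : (((n + 1).choose 2 + n.choose 2 : ℕ) : ℚ) = n * n := by
    push_cast [Nat.cast_choose_two]
    ring
  exact_mod_cast h

theorem isCompl_range_embL_prod {n : ℕ} (hn : 1 ≤ n) :
    IsCompl (LinearMap.range (embL n))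
      (((upperTriangularSubmodule n).map (conjL (cayley n))).prod
        ((upperTriangularSubmodule (n - 1)).map (conjL (cayley (n - 1))))) := by
  refine (Submodule.isCompl_iff_disjoint _ _ ?_).mpr ?_
  · simp only [Module.finrank_prod, Module.finrank_matrix, finrank_range_embL,
      Submodule.finrank_prod_eq, finrank_map_conjL, Fintype.card_fin, Module.finrank_self]
    rw [Nat.sub_add_cancel hn, Nat.choose_succ_two_add_choose_two]
    omega
  · obtain ⟨m, rfl⟩ : ∃ m, n = m + 1 := ⟨n - 1, by omega⟩
    exact disjoint_range_embL_prod m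

/-- For `n ≥ 2`, letting `g = gl_n(ℂ) × gl_{n-1}(ℂ)` and `h ⊂ g` the image of
`gl_{n-1}(ℂ)` under `x ↦ (diag(x,0), x)`, there are Borel subalgebras
`b_n ⊂ gl_n(ℂ)` and `b_{n-1} ⊂ gl_{n-1}(ℂ)` (conjugates of the upper
triangular matrices, namely the theta-stable ones built from the fundamental
Cartan subalgebras: they are stable under `θ(x) = -xᵀ`) such that
`g = h ⊕ b` with `b = b_n × b_{n-1}` as vector spaces. -/
theorem stmt_4 (n : ℕ) (hn : 2 ≤ n) :
    ∃ (u : GL (Fin n) ℂ) (w : GL (Fin (n - 1)) ℂ),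
      (∀ x ∈ (upperTriangularSubmodule n).map (conjL u),
        -xᵀ ∈ (upperTriangularSubmodule n).map (conjL u)) ∧
      (∀ x ∈ (upperTriangularSubmodule (n - 1)).map (conjL w),
        -xᵀ ∈ (upperTriangularSubmodule (n - 1)).map (conjL w)) ∧
      IsCompl (LinearMap.range (embL n))
        (((upperTriangularSubmodule n).map (conjL u)).prod
          ((upperTriangularSubmodule (n - 1)).map (conjL w))) :=
  ⟨cayley n, cayley (n - 1), map_conjL_cayley_transpose_stable n,
    map_conjL_cayley_transpose_stable (n - 1), isCompl_range_embL_prod (by omega)⟩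
end

section
/- Let G be a unimodular locally compact group, H ≤ G a closed unimodular subgroup, and Ξ : G → ℝ_{>0} a continuous function whose restriction to H is integrable with respect to a Haar measure dh on H. Let V be a complex topological vector space with a continuous Hermitian form ⟨·,·⟩ and a G-action, and suppose there is a continuous seminorm |·| on V with |⟨g·u, v⟩| ≤ Ξ(g)·|u|·|v| for all u,v ∈ V and g ∈ G. Then for any continuous character χ : H → {±1}, the integral (u,v) ↦ ∫_H ⟨h·u, v⟩ χ(h) dh converges absolutely for all u,v ∈ V and defines a Hermitian form on V. -/
/-!
Since `H` is unimodular, `μ.inv` is again a left Haar measure on `H`, and comparing the two on a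
symmetrised bump function shows that they agree on open sets. The positive integrable function
`Ξ|_H` exhausts `H` by open sets of finite measure, so `μ` is inversion invariant. Integrability
follows from `|B₀(h·u, v) χ(h)| ≤ Ξ(h) |u| |v|`, and Hermitian symmetry from the substitution
`h ↦ h⁻¹`, using `conj B₀(h·u, v) = B₀(h⁻¹·v, u)` and `χ(h⁻¹) = χ(h) = conj χ(h)`.
-/

open MeasureTheory Measure ComplexConjugate

theorem MeasureTheory.Measure.ext_of_isOpen_of_integrable {X : Type*} [TopologicalSpace X]
    [MeasurableSpace X] [BorelSpace X] {μ ν : Measure X} (h : ∀ s, IsOpen s → μ s = ν s)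
    {f : X → ℝ} (hf : Continuous f) (hpos : ∀ x, 0 < f x) (hint : Integrable f μ) : μ = ν := by
  refine ext_of_generateFrom_of_iUnion {s | IsOpen s} (fun n : ℕ ↦ {x | 1 / ((n : ℝ) + 1) < f x})
    BorelSpace.measurable_eq isPiSystem_isOpen ?_ (fun n ↦ isOpen_lt continuous_const hf) ?_ h
  · ext x
    simpa using exists_nat_one_div_lt (hpos x)
  · intro n
    have hsub : {x | 1 / ((n : ℝ) + 1) < f x} ⊆ {x | 1 / ((n : ℝ) + 1) ≤ f x} :=
      fun _ hx ↦ le_of_lt hx.out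
    exact ((measure_mono hsub).trans_lt (hint.measure_ge_lt_top Nat.one_div_pos_of_nat)).ne

section Unimodular

variable {K : Type*} [Group K] [TopologicalSpace K] [IsTopologicalGroup K]
  [MeasurableSpace K] [BorelSpace K] (μ : Measure K) [μ.IsHaarMeasure] [μ.IsMulRightInvariant]

instance MeasureTheory.Measure.IsHaarMeasure.inv_of_isMulRightInvariant : μ.inv.IsHaarMeasure :=
  ⟨⟩

theorem MeasureTheory.Measure.haarScalarFactor_inv_eq_one [LocallyCompactSpace K] :
    haarScalarFactor μ.inv μ = 1 := by
  obtain ⟨⟨g, g_cont⟩, g_comp, g_nonneg, g_one⟩ :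
      ∃ g : C(K, ℝ), HasCompactSupport g ∧ 0 ≤ g ∧ g 1 ≠ 0 := exists_continuous_nonneg_pos 1
  have g_comp_inv : HasCompactSupport fun x ↦ g x⁻¹ := g_comp.comp_homeomorph (Homeomorph.inv K)
  have g_cont_inv : Continuous fun x ↦ g x⁻¹ := g_cont.comp continuous_inv
  -- the symmetrised bump function has the same integral against `μ.inv` and `μ`
  set f : K → ℝ := fun x ↦ g x + g x⁻¹
  have f_cont : Continuous f := g_cont.add g_cont_inv
  have f_inv : ∫ x, f x ∂μ.inv = ∫ x, f x ∂μ := by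
    rw [inv_def, integral_map measurable_inv.aemeasurable f_cont.aestronglyMeasurable]
    simp only [f, inv_inv, add_comm]
  have f_pos : 0 < ∫ x, f x ∂μ := by
    rw [integral_add (g_cont.integrable_of_hasCompactSupport g_comp)
      (g_cont_inv.integrable_of_hasCompactSupport g_comp_inv)]
    exact add_pos_of_pos_of_nonneg
      (g_cont.integral_pos_of_hasCompactSupport_nonneg_nonzero g_comp g_nonneg g_one)
      (integral_nonneg fun x ↦ g_nonneg _)
  have := haarScalarFactor_eq_integral_div μ.inv μ f_cont (g_comp.add g_comp_inv) f_pos.ne'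
  rw [f_inv, div_self f_pos.ne'] at this
  exact_mod_cast this

theorem MeasureTheory.Measure.isInvInvariant_of_integrable [LocallyCompactSpace K]
    {f : K → ℝ} (hf : Continuous f) (hpos : ∀ x, 0 < f x) (hint : Integrable f μ) :
    μ.IsInvInvariant := by
  refine ⟨(ext_of_isOpen_of_integrable (fun s hs ↦ ?_) hf hpos hint).symm⟩
  rw [measure_isHaarMeasure_eq_smul_of_isOpen μ.inv μ hs, haarScalarFactor_inv_eq_one, one_smul]

end Unimodular

theorem MonoidHom.map_inv_of_eq_one_or_eq_neg_one {K : Type*} [Group K] (χ : K →* ℂ)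
    (hχ : ∀ k, χ k = 1 ∨ χ k = -1) (k : K) : χ k⁻¹ = χ k := by
  have : χ k⁻¹ = (χ k)⁻¹ := eq_inv_of_mul_eq_one_left (by rw [← map_mul, inv_mul_cancel, map_one])
  rcases hχ k with e | e <;> simp [this, e]

theorem conj_apply_smul_eq_apply_inv_smul {K V : Type*} [Group K] [MulAction K V]
    {B : V → V → ℂ} (hherm : ∀ u v, B v u = conj (B u v))
    (hinv : ∀ (k : K) u v, B (k • u) (k • v) = B u v) (k : K) (u v : V) :
    conj (B (k • u) v) = B (k⁻¹ • v) u := by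
  rw [← hherm, ← hinv k⁻¹, inv_smul_smul]

theorem stmt_18_general {G : Type*} [Group G] [TopologicalSpace G] [IsTopologicalGroup G]
    [LocallyCompactSpace G]
    (H : Subgroup G) (hH : IsClosed (H : Set G))
    [MeasurableSpace ↥H] [BorelSpace ↥H]
    (μ : Measure ↥H) [μ.IsHaarMeasure] [μ.IsMulRightInvariant]
    {V : Type*} [AddCommGroup V] [Module ℂ V] [TopologicalSpace V]
    [MulAction G V] [ContinuousSMul G V]
    (B₀ : V → V → ℂ)
    (hherm : ∀ u v : V, B₀ v u = starRingEnd ℂ (B₀ u v))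
    (hBcont : Continuous fun q : V × V => B₀ q.1 q.2)
    (hinv : ∀ (h : ↥H) (u v : V), B₀ ((h : G) • u) ((h : G) • v) = B₀ u v)
    (p : Seminorm ℂ V)
    (Xi : G → ℝ) (hXicont : Continuous Xi) (hXipos : ∀ g : G, 0 < Xi g)
    (hXiint : Integrable (fun h : ↥H => Xi (h : G)) μ)
    (hbound : ∀ (g : G) (u v : V), ‖B₀ (g • u) v‖ ≤ Xi g * p u * p v)
    (χ : ↥H →* ℂ) (hχ : ∀ h : ↥H, χ h = 1 ∨ χ h = -1) (hχcont : Continuous χ) :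
    (∀ u v : V, Integrable (fun h : ↥H => B₀ ((h : G) • u) v * χ h) μ) ∧
    (∀ u v : V, (∫ h : ↥H, B₀ ((h : G) • v) u * χ h ∂μ) =
      starRingEnd ℂ (∫ h : ↥H, B₀ ((h : G) • u) v * χ h ∂μ)) := by
  have hχnorm (h : ↥H) : ‖χ h‖ = 1 := by rcases hχ h with e | e <;> simp [e]
  refine ⟨fun u v ↦ ?_, fun u v ↦ ?_⟩
  · have hcont : Continuous fun h : ↥H ↦ B₀ ((h : G) • u) v * χ h :=
      (hBcont.comp ((continuous_subtype_val.smul continuous_const).prodMk continuous_const)).mul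
        hχcont
    refine ((hXiint.mul_const (p u)).mul_const (p v)).mono' hcont.aestronglyMeasurable
      (.of_forall fun h ↦ ?_)
    simpa only [norm_mul, hχnorm, mul_one] using hbound _ u v
  · have hχconj (h : ↥H) : conj (χ h) = χ h := by rcases hχ h with e | e <;> simp [e]
    have : LocallyCompactSpace ↥H := hH.locallyCompactSpace
    have : μ.IsInvInvariant := isInvInvariant_of_integrable μ
      (hXicont.comp continuous_subtype_val) (fun h ↦ hXipos _) hXiint
    rw [← integral_conj, ← integral_inv_eq_self _ μ]
    refine integral_congr_ae (.of_forall fun h ↦ ?_)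
    simp only [map_mul, hχconj, χ.map_inv_of_eq_one_or_eq_neg_one hχ]
    exact congrArg (· * χ h) (conj_apply_smul_eq_apply_inv_smul hherm hinv h u v).symm

/-- Let `G` be a unimodular locally compact group (with a Haar measure `ν`
that is both left and right invariant), `H ≤ G` a closed unimodular subgroup
with Haar measure `μ` (left and right invariant), and `Ξ : G → ℝ_{>0}`
continuous with integrable restriction to `H`.  Let `V` be a complex
topological vector space with a continuous `G`-action, a continuous Hermitian
form `B₀` invariant under `H`, and a continuous seminorm `p` with
`‖B₀(g·u, v)‖ ≤ Ξ(g)·p(u)·p(v)`.  Then for any continuous character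
`χ : H → {±1}`, the integral `(u,v) ↦ ∫_H B₀(h·u, v) χ(h) dh` converges
absolutely for all `u, v` and defines a Hermitian form on `V`. -/
theorem stmt_18 {G : Type*} [Group G] [TopologicalSpace G] [IsTopologicalGroup G]
    [LocallyCompactSpace G] [MeasurableSpace G] [BorelSpace G]
    (ν : Measure G) [ν.IsHaarMeasure] [ν.IsMulRightInvariant]
    (H : Subgroup G) (hH : IsClosed (H : Set G))
    [MeasurableSpace ↥H] [BorelSpace ↥H]
    (μ : Measure ↥H) [μ.IsHaarMeasure] [μ.IsMulRightInvariant]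
    {V : Type*} [AddCommGroup V] [Module ℂ V] [TopologicalSpace V]
    [MulAction G V] [ContinuousSMul G V]
    (B₀ : V → V → ℂ)
    (hherm : ∀ u v : V, B₀ v u = starRingEnd ℂ (B₀ u v))
    (hBcont : Continuous fun q : V × V => B₀ q.1 q.2)
    (hinv : ∀ (h : ↥H) (u v : V), B₀ ((h : G) • u) ((h : G) • v) = B₀ u v)
    (p : Seminorm ℂ V) (hpcont : Continuous p)
    (Xi : G → ℝ) (hXicont : Continuous Xi) (hXipos : ∀ g : G, 0 < Xi g)
    (hXiint : Integrable (fun h : ↥H => Xi (h : G)) μ)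
    (hbound : ∀ (g : G) (u v : V), ‖B₀ (g • u) v‖ ≤ Xi g * p u * p v)
    (χ : ↥H →* ℂ) (hχ : ∀ h : ↥H, χ h = 1 ∨ χ h = -1) (hχcont : Continuous χ) :
    (∀ u v : V, Integrable (fun h : ↥H => B₀ ((h : G) • u) v * χ h) μ) ∧
    (∀ u v : V, (∫ h : ↥H, B₀ ((h : G) • v) u * χ h ∂μ) =
      starRingEnd ℂ (∫ h : ↥H, B₀ ((h : G) • u) v * χ h ∂μ)) :=
  stmt_18_general H hH μ B₀ hherm hBcont hinv p Xi hXicont hXipos hXiint hbound χ hχ hχcont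
end
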